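/- Let V be a quasi-variety of universal algebras (viewed as a category) in which every morphism with zero kernel is a monomorphism, and let X be a finitely complete category. Then the category V(X) of internal V-algebras in X also satisfies: every morphism with zero kernel is a monomorphism. -/

import Mathlib

open CategoryTheory CategoryTheory.Limits

universe w v u

noncomputable section

/-- An algebraic signature: a type of operation symbols with finite arities. -/
structure Signature where
  Op : Type w
  arity : Op → ℕ

/-- Terms of a signature in `n` variables. -/
inductive Term (S : Signature) (n : ℕ) where
  | var : Fin n → Term S n
  | app : (o : S.Op) → (Fin (S.arity o) → Term S n) → Term S n

/-- A quasi-identity: finitely many premises `sᵢ = tᵢ` implying a conclusion, in `n`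
variables (an identity is the case of no premises). -/
structure QuasiId (S : Signature) where
  n : ℕ
  prems : List (Term S n × Term S n)
  concl : Term S n × Term S n

variable (S : Signature.{w}) (X : Type u) [Category.{v} X] [HasFiniteProducts X]

/-- An internal `S`-algebra in a category `X` with finite products. -/
structure PreAlg where
  carrier : X
  ops : ∀ o : S.Op, (∏ᶜ fun _ : Fin (S.arity o) => carrier) ⟶ carrier

variable {S X}

/-- Interpretation of a term as a morphism `carrierⁿ ⟶ carrier`. -/
def PreAlg.interp (A : PreAlg S X) {n : ℕ} (t : Term S n) :
    (∏ᶜ fun _ : Fin n => A.carrier) ⟶ A.carrier :=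
  Term.rec (motive := fun _ => (∏ᶜ fun _ : Fin n => A.carrier) ⟶ A.carrier)
    (fun i => Pi.π _ i) (fun o _ ih => Pi.lift ih ≫ A.ops o) t

/-- Internal satisfaction of a quasi-identity, via generalized elements. -/
def PreAlg.Sat (A : PreAlg S X) (q : QuasiId S) : Prop :=
  ∀ (Z : X) (g : Z ⟶ ∏ᶜ fun _ : Fin q.n => A.carrier),
    (∀ p ∈ q.prems, g ≫ A.interp p.1 = g ≫ A.interp p.2) →
      g ≫ A.interp q.concl.1 = g ≫ A.interp q.concl.2

variable (S X) in
/-- The category of internal models in `X` of the quasi-variety presented by `Q`. -/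
structure Alg (Q : List (QuasiId S)) extends PreAlg S X where
  sat : ∀ q ∈ Q, toPreAlg.Sat q

variable {Q : List (QuasiId S)}

@[ext]
structure IAlgHom (A B : Alg S X Q) where
  hom : A.carrier ⟶ B.carrier
  comm : ∀ o : S.Op, A.ops o ≫ hom = Limits.Pi.map (fun _ => hom) ≫ B.ops o

instance : Category (Alg S X Q) where
  Hom := IAlgHom
  id A := ⟨𝟙 A.carrier, by intro o; simp⟩
  comp f g := ⟨f.hom ≫ g.hom, by
    intro o
    rw [← Category.assoc, f.comm, Category.assoc, g.comm, ← Category.assoc, ← Limits.Pi.map_comp_map]⟩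
  id_comp f := by apply IAlgHom.ext; exact Category.id_comp f.hom
  comp_id f := by apply IAlgHom.ext; exact Category.comp_id f.hom
  assoc f g h := by apply IAlgHom.ext; exact Category.assoc f.hom g.hom h.hom

/-- The condition "every morphism whose kernel is zero is a monomorphism", phrased with
explicit zero objects and kernel (pullback) squares so that it makes sense in any
category. -/
def ZeroKerMono (D : Type*) [Category D] : Prop :=
  ∀ {Z A B K : D} (hZ : IsZero Z) (f : A ⟶ B) (i : K ⟶ A) (j : K ⟶ Z),
    IsPullback i j f (hZ.to_ B) → IsZero K → Mono f

section Helpers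

variable {S : Signature.{w}} {X : Type u} [Category.{v} X] [HasFiniteProducts X]

@[simp] lemma interp_var (A : PreAlg S X) {n : ℕ} (i : Fin n) :
    A.interp (Term.var i) = Pi.π (fun _ : Fin n => A.carrier) i := rfl

@[simp] lemma interp_app (A : PreAlg S X) {n : ℕ} (o : S.Op) (ts : Fin (S.arity o) → Term S n) :
    A.interp (Term.app o ts) = Pi.lift (fun i => A.interp (ts i)) ≫ A.ops o := rfl

/-- Substitution of terms. -/
def Term.subst {S : Signature.{w}} {n m : ℕ} : Term S n → (Fin n → Term S m) → Term S m
  | .var i, σ => σ i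
  | .app o ts, σ => .app o (fun i => (ts i).subst σ)

@[simp] lemma subst_var {S : Signature.{w}} {n : ℕ} (t : Term S n) :
    t.subst Term.var = t := by
  induction t with
  | var i => rfl
  | app o ts ih => simp [Term.subst, ih]

lemma interp_subst (A : PreAlg S X) {n m : ℕ} (t : Term S n) (σ : Fin n → Term S m) :
    A.interp (t.subst σ) = Pi.lift (fun i => A.interp (σ i)) ≫ A.interp t := by
  induction t with
  | var i => simp [Term.subst]
  | app o ts ih =>
    simp only [Term.subst, interp_app]
    rw [← Category.assoc]
    congr 1
    ext i
    simp [ih]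

lemma interp_natural {A B : PreAlg S X} (h : A.carrier ⟶ B.carrier)
    (comm : ∀ o : S.Op, A.ops o ≫ h = Limits.Pi.map (fun _ => h) ≫ B.ops o)
    {n : ℕ} (t : Term S n) :
    A.interp t ≫ h = Limits.Pi.map (fun _ => h) ≫ B.interp t := by
  induction t with
  | var i => simp
  | app o ts ih =>
    simp only [interp_app, Category.assoc]
    rw [comm o, ← Category.assoc, ← Category.assoc]
    congr 1
    ext i
    simp [ih]

/-- Evaluation of a term at a tuple of generalized elements. -/
def evalX (A : PreAlg S X) {W : X} {n : ℕ} (v : Fin n → (W ⟶ A.carrier)) (t : Term S n) :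
    W ⟶ A.carrier :=
  Pi.lift v ≫ A.interp t

@[simp] lemma evalX_var (A : PreAlg S X) {W : X} {n : ℕ} (v : Fin n → (W ⟶ A.carrier))
    (i : Fin n) : evalX A v (Term.var i) = v i := by simp [evalX]

lemma evalX_app (A : PreAlg S X) {W : X} {n : ℕ} (v : Fin n → (W ⟶ A.carrier))
    (o : S.Op) (ts : Fin (S.arity o) → Term S n) :
    evalX A v (Term.app o ts) = Pi.lift (fun i => evalX A v (ts i)) ≫ A.ops o := by
  simp only [evalX, interp_app, ← Category.assoc]
  congr 1
  ext i
  simp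

lemma evalX_subst (A : PreAlg S X) {W : X} {n m : ℕ} (v : Fin m → (W ⟶ A.carrier))
    (t : Term S n) (σ : Fin n → Term S m) :
    evalX A v (t.subst σ) = evalX A (fun i => evalX A v (σ i)) t := by
  simp only [evalX, interp_subst, ← Category.assoc]
  congr 1
  ext i
  simp [evalX]

lemma lift_map {W P R : X} {n : ℕ} (v : Fin n → (W ⟶ P)) (h : P ⟶ R) :
    Pi.lift v ≫ Limits.Pi.map (fun _ : Fin n => h) = Pi.lift (fun i => v i ≫ h) := by
  apply Limits.Pi.hom_ext
  intro i
  simp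

lemma evalX_comp_hom {A B : PreAlg S X} (h : A.carrier ⟶ B.carrier)
    (comm : ∀ o : S.Op, A.ops o ≫ h = Limits.Pi.map (fun _ => h) ≫ B.ops o)
    {W : X} {n : ℕ} (v : Fin n → (W ⟶ A.carrier)) (t : Term S n) :
    evalX A v t ≫ h = evalX B (fun i => v i ≫ h) t := by
  simp only [evalX, Category.assoc, interp_natural h comm]
  rw [← Category.assoc, lift_map]

end Helpers
section PartX

variable {S : Signature.{w}} {Q : List (QuasiId S)} {X : Type u} [Category.{v} X]
  [HasFiniteProducts X] [HasFiniteLimits X]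

@[simp] lemma IAlgHom.comp_hom {A B C : Alg S X Q} (f : A ⟶ B) (g : B ⟶ C) :
    (f ≫ g).hom = f.hom ≫ g.hom := rfl

@[simp] lemma IAlgHom.id_hom (A : Alg S X Q) : (𝟙 A : A ⟶ A).hom = 𝟙 A.carrier := rfl

variable (S Q X) in
/-- The terminal algebra. -/
def TAlg : Alg S X Q where
  carrier := ⊤_ X
  ops _ := terminal.from _
  sat _ _ _ _ _ := terminal.hom_ext _ _

/-- The unique morphism to the terminal algebra. -/
def toT (A : Alg S X Q) : A ⟶ TAlg S Q X :=
  ⟨terminal.from _, fun _ => terminal.hom_ext _ _⟩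

/-- The carrier of a zero algebra is terminal. -/
noncomputable def zcIsTerminal {Z : Alg S X Q} (hZ : IsZero Z) : IsTerminal Z.carrier := by
  have h1 : toT Z ≫ hZ.from_ (TAlg S Q X) = 𝟙 Z := hZ.eq_of_src _ _
  have h2 : hZ.from_ (TAlg S Q X) ≫ toT Z = 𝟙 (TAlg S Q X) :=
    IAlgHom.ext (terminal.hom_ext _ _)
  exact IsTerminal.ofIso terminalIsTerminal
    ⟨(hZ.from_ (TAlg S Q X)).hom, (toT Z).hom,
      congrArg IAlgHom.hom h2, congrArg IAlgHom.hom h1⟩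

/-- The zero generalized element. -/
noncomputable def zeroc {Z : Alg S X Q} (hZ : IsZero Z) (A : Alg S X Q) (W : X) :
    W ⟶ A.carrier :=
  (zcIsTerminal hZ).from W ≫ (hZ.to_ A).hom

lemma zeroc_comp {Z A B : Alg S X Q} (hZ : IsZero Z) (f : A ⟶ B) (W : X) :
    zeroc hZ A W ≫ f.hom = zeroc hZ B W := by
  have h : hZ.to_ A ≫ f = hZ.to_ B := hZ.eq_of_src _ _
  simp only [zeroc, Category.assoc]
  rw [← IAlgHom.comp_hom, h]

lemma zeroc_absorb {Z : Alg S X Q} (hZ : IsZero Z) (A : Alg S X Q) (W : X) (o : S.Op) :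
    Pi.lift (fun _ : Fin (S.arity o) => zeroc hZ A W) ≫ A.ops o = zeroc hZ A W := by
  have : (fun _ : Fin (S.arity o) => zeroc hZ A W) =
      fun _ => (zcIsTerminal hZ).from W ≫ (hZ.to_ A).hom := rfl
  rw [this, ← lift_map, Category.assoc, ← (hZ.to_ A).comm o, ← Category.assoc]
  rw [(zcIsTerminal hZ).hom_ext (Pi.lift _ ≫ Z.ops o) ((zcIsTerminal hZ).from W)]
  rfl

section Star

variable {Z A B K : Alg S X Q} (hZ : IsZero Z) (f : A ⟶ B) (i : K ⟶ A) (j : K ⟶ Z)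

lemma palg_w (o : S.Op) :
    (Limits.Pi.map (fun _ : Fin (S.arity o) => pullback.fst f.hom (hZ.to_ B).hom) ≫ A.ops o) ≫
        f.hom =
      (Limits.Pi.map (fun _ : Fin (S.arity o) => pullback.snd f.hom (hZ.to_ B).hom) ≫ Z.ops o) ≫
        (hZ.to_ B).hom := by
  rw [Category.assoc, f.comm o, Category.assoc, (hZ.to_ B).comm o, ← Category.assoc,
    ← Category.assoc, Limits.Pi.map_comp_map, Limits.Pi.map_comp_map]
  have : (fun _ : Fin (S.arity o) => pullback.fst f.hom (hZ.to_ B).hom ≫ f.hom) =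
      fun _ => pullback.snd f.hom (hZ.to_ B).hom ≫ (hZ.to_ B).hom :=
    funext fun _ => pullback.condition
  rw [this]


/-- The underlying pre-algebra of the pullback algebra. -/
@[reducible] noncomputable def Ppre : PreAlg S X where
  carrier := pullback f.hom (hZ.to_ B).hom
  ops o := pullback.lift
    (Limits.Pi.map (fun _ => pullback.fst f.hom (hZ.to_ B).hom) ≫ A.ops o)
    (Limits.Pi.map (fun _ => pullback.snd f.hom (hZ.to_ B).hom) ≫ Z.ops o)
    (palg_w hZ f o)

lemma Ppre_fstcomm (o : S.Op) :
    (Ppre hZ f).ops o ≫ pullback.fst f.hom (hZ.to_ B).hom =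
      Limits.Pi.map (fun _ => pullback.fst f.hom (hZ.to_ B).hom) ≫ A.ops o :=
  pullback.lift_fst _ _ _

lemma Ppre_sndcomm (o : S.Op) :
    (Ppre hZ f).ops o ≫ pullback.snd f.hom (hZ.to_ B).hom =
      Limits.Pi.map (fun _ => pullback.snd f.hom (hZ.to_ B).hom) ≫ Z.ops o :=
  pullback.lift_snd _ _ _

variable (Q) in
/-- The pullback algebra of `f` along the zero morphism. -/
@[reducible] noncomputable def PAlg : Alg S X Q where
  toPreAlg := Ppre hZ f
  sat q hq W g hp := by
    apply pullback.hom_ext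
    · rw [Category.assoc, Category.assoc,
        interp_natural _ (Ppre_fstcomm hZ f) q.concl.1,
        interp_natural _ (Ppre_fstcomm hZ f) q.concl.2,
        ← Category.assoc, ← Category.assoc]
      refine A.sat q hq W _ (fun p hp' => ?_)
      rw [Category.assoc, Category.assoc,
        ← interp_natural _ (Ppre_fstcomm hZ f) p.1,
        ← interp_natural _ (Ppre_fstcomm hZ f) p.2,
        ← Category.assoc, ← Category.assoc, hp p hp']
    · rw [Category.assoc, Category.assoc,
        interp_natural _ (Ppre_sndcomm hZ f) q.concl.1,
        interp_natural _ (Ppre_sndcomm hZ f) q.concl.2,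
        ← Category.assoc, ← Category.assoc]
      refine Z.sat q hq W _ (fun p hp' => ?_)
      rw [Category.assoc, Category.assoc,
        ← interp_natural _ (Ppre_sndcomm hZ f) p.1,
        ← interp_natural _ (Ppre_sndcomm hZ f) p.2,
        ← Category.assoc, ← Category.assoc, hp p hp']

/-- First projection from the pullback algebra. -/
noncomputable def fstA : PAlg Q hZ f ⟶ A := ⟨pullback.fst _ _, Ppre_fstcomm hZ f⟩

/-- Second projection from the pullback algebra. -/
noncomputable def sndA : PAlg Q hZ f ⟶ Z := ⟨pullback.snd _ _, Ppre_sndcomm hZ f⟩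

lemma fstA_sndA_w : fstA hZ f ≫ f = sndA hZ f ≫ hZ.to_ B :=
  IAlgHom.ext pullback.condition

lemma PAlg_fstcomm (o : S.Op) :
    (PAlg Q hZ f).ops o ≫ pullback.fst f.hom (hZ.to_ B).hom =
      Limits.Pi.map (fun _ => pullback.fst f.hom (hZ.to_ B).hom) ≫ A.ops o :=
  pullback.lift_fst _ _ _

lemma PAlg_sndcomm (o : S.Op) :
    (PAlg Q hZ f).ops o ≫ pullback.snd f.hom (hZ.to_ B).hom =
      Limits.Pi.map (fun _ => pullback.snd f.hom (hZ.to_ B).hom) ≫ Z.ops o :=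
  pullback.lift_snd _ _ _

variable (hpb : IsPullback i j f (hZ.to_ B))

/-- The comparison morphism from the algebraic kernel to the pullback algebra. -/
noncomputable def kToP : K ⟶ PAlg Q hZ f where
  hom := pullback.lift i.hom j.hom (congrArg IAlgHom.hom hpb.w)
  comm o := by
    apply pullback.hom_ext
    · rw [Category.assoc, Category.assoc, pullback.lift_fst, PAlg_fstcomm,
        ← Category.assoc, Limits.Pi.map_comp_map]
      have : (fun _ : Fin (S.arity o) =>
          pullback.lift i.hom j.hom (congrArg IAlgHom.hom hpb.w) ≫
            pullback.fst f.hom (hZ.to_ B).hom) = fun _ => i.hom :=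
        funext fun _ => pullback.lift_fst _ _ _
      rw [this, ← i.comm o]
    · rw [Category.assoc, Category.assoc, pullback.lift_snd, PAlg_sndcomm,
        ← Category.assoc, Limits.Pi.map_comp_map]
      have : (fun _ : Fin (S.arity o) =>
          pullback.lift i.hom j.hom (congrArg IAlgHom.hom hpb.w) ≫
            pullback.snd f.hom (hZ.to_ B).hom) = fun _ => j.hom :=
        funext fun _ => pullback.lift_snd _ _ _
      rw [this, ← j.comm o]

lemma kToP_fstA : kToP hZ f i j hpb ≫ fstA hZ f = i :=
  IAlgHom.ext (pullback.lift_fst _ _ _)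

lemma kToP_sndA : kToP hZ f i j hpb ≫ sndA hZ f = j :=
  IAlgHom.ext (pullback.lift_snd _ _ _)

/-- The pullback algebra is zero when the algebraic kernel is zero. -/
noncomputable def palgIsZero (hK : IsZero K) : IsZero (PAlg Q hZ f) := by
  refine hK.of_iso ?_
  refine ⟨hpb.lift (fstA hZ f) (sndA hZ f) (fstA_sndA_w hZ f), kToP hZ f i j hpb, ?_, ?_⟩
  · apply IAlgHom.ext
    apply pullback.hom_ext
    · have e1 : (kToP hZ f i j hpb).hom ≫ pullback.fst f.hom (hZ.to_ B).hom = i.hom :=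
        congrArg IAlgHom.hom (kToP_fstA hZ f i j hpb)
      have e2 : (hpb.lift (fstA hZ f) (sndA hZ f) (fstA_sndA_w hZ f)).hom ≫ i.hom =
          pullback.fst f.hom (hZ.to_ B).hom :=
        congrArg IAlgHom.hom (hpb.lift_fst (fstA hZ f) (sndA hZ f) (fstA_sndA_w hZ f))
      simp only [IAlgHom.comp_hom, IAlgHom.id_hom, Category.id_comp, Category.assoc]
      rw [e1, e2]
    · have e1 : (kToP hZ f i j hpb).hom ≫ pullback.snd f.hom (hZ.to_ B).hom = j.hom :=
        congrArg IAlgHom.hom (kToP_sndA hZ f i j hpb)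
      have e2 : (hpb.lift (fstA hZ f) (sndA hZ f) (fstA_sndA_w hZ f)).hom ≫ j.hom =
          pullback.snd f.hom (hZ.to_ B).hom :=
        congrArg IAlgHom.hom (hpb.lift_snd (fstA hZ f) (sndA hZ f) (fstA_sndA_w hZ f))
      simp only [IAlgHom.comp_hom, IAlgHom.id_hom, Category.id_comp, Category.assoc]
      rw [e1, e2]
  · apply hpb.hom_ext
    · rw [Category.assoc, hpb.lift_fst, kToP_fstA, Category.id_comp]
    · rw [Category.assoc, hpb.lift_snd, kToP_sndA, Category.id_comp]

include i j hpb in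
/-- The key consequence of the kernel being zero: any generalized element killed by `f`
is zero. -/
lemma star (hK : IsZero K) {W : X} (u : W ⟶ A.carrier)
    (hu : u ≫ f.hom = zeroc hZ B W) : u = zeroc hZ A W := by
  have hP0 : IsZero (PAlg Q hZ f) := palgIsZero hZ f i j hpb hK
  have hfs : fstA hZ f = sndA hZ f ≫ hZ.to_ A := hP0.eq_of_src _ _
  have hu' : u ≫ f.hom = (zcIsTerminal hZ).from W ≫ (hZ.to_ B).hom := hu
  have hl := pullback.lift_fst u ((zcIsTerminal hZ).from W) hu'
  have hfst : pullback.fst f.hom (hZ.to_ B).hom =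
      pullback.snd f.hom (hZ.to_ B).hom ≫ (hZ.to_ A).hom := congrArg IAlgHom.hom hfs
  rw [← hl, hfst, ← Category.assoc]
  rw [(zcIsTerminal hZ).hom_ext
    (pullback.lift u ((zcIsTerminal hZ).from W) hu' ≫ pullback.snd f.hom (hZ.to_ B).hom)
    ((zcIsTerminal hZ).from W)]
  rfl

end Star

end PartX
section PartSet

variable {S : Signature.{w}} {Q : List (QuasiId S)} {X : Type u} [Category.{v} X]
  [HasFiniteProducts X]

variable (A : Alg S X Q) {W : X} {I : Type} {k : ℕ} (v : I → Fin k → (W ⟶ A.carrier))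

/-- Two terms are related if they have the same evaluation at each valuation. -/
def qrel : Setoid (Term S k) where
  r t s := ∀ i₀ : I, evalX A.toPreAlg (v i₀) t = evalX A.toPreAlg (v i₀) s
  iseqv := ⟨fun _ _ => rfl, fun h i₀ => (h i₀).symm, fun h1 h2 i₀ => (h1 i₀).trans (h2 i₀)⟩

/-- The carrier of the quotient algebra. -/
@[reducible] def QCar : Type w := Quotient (qrel A v)

/-- Evaluation is well-defined on the quotient. -/
def qeval (i₀ : I) : QCar A v → (W ⟶ A.carrier) :=
  Quotient.lift (evalX A.toPreAlg (v i₀)) (fun _ _ h => h i₀)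

@[simp] lemma qeval_mk (i₀ : I) (t : Term S k) :
    qeval A v i₀ (Quotient.mk (qrel A v) t) = evalX A.toPreAlg (v i₀) t := rfl

lemma qcar_ext {x y : QCar A v} (h : ∀ i₀ : I, qeval A v i₀ x = qeval A v i₀ y) : x = y := by
  induction x using Quotient.ind
  induction y using Quotient.ind
  exact Quotient.sound h

/-- Operations on the quotient algebra. -/
noncomputable def qops (o : S.Op) :
    (∏ᶜ fun _ : Fin (S.arity o) => QCar A v) ⟶ QCar A v :=
  TypeCat.ofHom fun p => Quotient.mk (qrel A v)
    (Term.app o (fun a => (Pi.π (fun _ : Fin (S.arity o) => QCar A v) a p).out))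

lemma qops_mk (o : S.Op) (p : ∏ᶜ fun _ : Fin (S.arity o) => QCar A v)
    (s : Fin (S.arity o) → Term S k)
    (h : ∀ a, Pi.π (fun _ : Fin (S.arity o) => QCar A v) a p = Quotient.mk (qrel A v) (s a)) :
    qops A v o p = Quotient.mk (qrel A v) (Term.app o s) := by
  apply Quotient.sound
  intro i₀
  rw [evalX_app, evalX_app]
  congr 1
  apply Limits.Pi.hom_ext
  intro a
  simp only [Pi.lift_π]
  have : Quotient.mk (qrel A v) (Pi.π (fun _ : Fin (S.arity o) => QCar A v) a p).out =
      Quotient.mk (qrel A v) (s a) := by rw [Quotient.out_eq, h a]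
  exact Quotient.exact this i₀

lemma qeval_qops (i₀ : I) (o : S.Op) (p : ∏ᶜ fun _ : Fin (S.arity o) => QCar A v) :
    qeval A v i₀ (qops A v o p) =
      Pi.lift (fun a => qeval A v i₀ (Pi.π (fun _ : Fin (S.arity o) => QCar A v) a p)) ≫
        A.ops o := by
  show evalX A.toPreAlg (v i₀) (Term.app o _) = _
  rw [evalX_app]
  congr 1
  apply Limits.Pi.hom_ext
  intro a
  simp only [Pi.lift_π]
  conv_rhs => rw [← Quotient.out_eq (Pi.π (fun _ : Fin (S.arity o) => QCar A v) a p)]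
  rfl

/-- The underlying pre-algebra of the quotient algebra. -/
@[reducible] noncomputable def QPre : PreAlg S (Type w) where
  carrier := QCar A v
  ops := qops A v

lemma qinterp (i₀ : I) {n : ℕ} (t : Term S n) (p : ∏ᶜ fun _ : Fin n => QCar A v) :
    qeval A v i₀ ((QPre A v).interp t p) =
      evalX A.toPreAlg (fun a => qeval A v i₀ (Pi.π (fun _ : Fin n => QCar A v) a p)) t := by
  induction t with
  | var i => simp [QPre]
  | app o ts ih =>
    have happ : (QPre A v).interp (Term.app o ts) p =
        qops A v o (Pi.lift (fun a => (QPre A v).interp (ts a)) p) := by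
      rw [interp_app]
      rfl
    rw [happ, evalX_app]
    show qeval A v i₀ (qops A v o _) = _
    rw [qeval_qops]
    congr 1
    apply Limits.Pi.hom_ext
    intro a
    simp only [Pi.lift_π]
    have hπ : Pi.π (fun _ : Fin (S.arity o) => QCar A v) a
        (Pi.lift (fun b => (QPre A v).interp (ts b)) p) = (QPre A v).interp (ts a) p := by
      have := types_congr_hom (Pi.lift_π (fun b => (QPre A v).interp (ts b)) a) p
      simpa using this
    rw [hπ, ih a]

/-- The quotient algebra. -/
@[reducible] noncomputable def QAlg : Alg S (Type w) Q where
  toPreAlg := QPre A v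
  sat q hq Z g hp := by
    apply ConcreteCategory.hom_ext; intro z
    apply qcar_ext
    intro i₀
    rw [show ((g ≫ (QPre A v).interp q.concl.1) z) = (QPre A v).interp q.concl.1 (g z) from rfl,
      show ((g ≫ (QPre A v).interp q.concl.2) z) = (QPre A v).interp q.concl.2 (g z) from rfl,
      qinterp, qinterp]
    show evalX _ _ q.concl.1 = evalX _ _ q.concl.2
    simp only [evalX]
    refine A.sat q hq W _ (fun pr hpr => ?_)
    have h1 : (QPre A v).interp pr.1 (g z) = (QPre A v).interp pr.2 (g z) :=
      types_congr_hom (hp pr hpr) z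
    have h2 := congrArg (qeval A v i₀) h1
    rw [qinterp, qinterp] at h2
    simpa only [evalX] using h2

/-- The function underlying a substitution-induced morphism between quotient algebras. -/
noncomputable def qhomFun {B : Alg S X Q} {I' : Type} {k' : ℕ}
    (w : I' → Fin k' → (W ⟶ B.carrier)) (σ : Fin k → Term S k')
    (hcomp : ∀ t s : Term S k,
      (∀ i₀ : I, evalX A.toPreAlg (v i₀) t = evalX A.toPreAlg (v i₀) s) →
      ∀ i₁ : I', evalX B.toPreAlg (w i₁) (t.subst σ) = evalX B.toPreAlg (w i₁) (s.subst σ)) :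
    QCar A v ⟶ QCar B w :=
  TypeCat.ofHom <| Quotient.lift (fun t => Quotient.mk (qrel B w) (t.subst σ))
    (fun t s h => Quotient.sound (hcomp t s h))

lemma pi_map_apply {α β : Type w} {n : ℕ} (F : α ⟶ β) (p : ∏ᶜ fun _ : Fin n => α) (a : Fin n) :
    Pi.π (fun _ : Fin n => β) a (Limits.Pi.map (fun _ : Fin n => F) p) =
      F (Pi.π (fun _ : Fin n => α) a p) := by
  have h1 : Limits.Pi.map (fun _ : Fin n => F) ≫ Pi.π (fun _ : Fin n => β) a =
      Pi.π (fun _ : Fin n => α) a ≫ F := by simp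
  exact types_congr_hom h1 p

/-- A substitution-induced morphism between quotient algebras. -/
noncomputable def qhom {B : Alg S X Q} {I' : Type} {k' : ℕ}
    (w : I' → Fin k' → (W ⟶ B.carrier)) (σ : Fin k → Term S k')
    (hcomp : ∀ t s : Term S k,
      (∀ i₀ : I, evalX A.toPreAlg (v i₀) t = evalX A.toPreAlg (v i₀) s) →
      ∀ i₁ : I', evalX B.toPreAlg (w i₁) (t.subst σ) = evalX B.toPreAlg (w i₁) (s.subst σ)) :
    QAlg A v ⟶ QAlg B w where
  hom := qhomFun A v w σ hcomp
  comm o := by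
    ext p
    show qhomFun A v w σ hcomp (qops A v o p) =
      qops B w o (Limits.Pi.map (fun _ => qhomFun A v w σ hcomp) p)
    rw [qops_mk A v o p (fun a => (Pi.π (fun _ : Fin (S.arity o) => QCar A v) a p).out)
      (fun a => by rw [Quotient.out_eq])]
    rw [qops_mk B w o (Limits.Pi.map (fun _ => qhomFun A v w σ hcomp) p)
      (fun a => ((Pi.π (fun _ : Fin (S.arity o) => QCar A v) a p).out.subst σ))
      (fun a => by
        rw [pi_map_apply]
        conv_lhs => rw [← Quotient.out_eq (Pi.π (fun _ : Fin (S.arity o) => QCar A v) a p)]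
        rfl)]
    rfl

@[simp] lemma qhom_mk {B : Alg S X Q} {I' : Type} {k' : ℕ}
    (w : I' → Fin k' → (W ⟶ B.carrier)) (σ : Fin k → Term S k') (hcomp) (t : Term S k) :
    (qhom A v w σ hcomp).hom (Quotient.mk (qrel A v) t) = Quotient.mk (qrel B w) (t.subst σ) :=
  rfl

end PartSet
section Final

variable {S : Signature.{w}} {Q : List (QuasiId S)} {X : Type u} [Category.{v} X]
  [HasFiniteProducts X] [HasFiniteLimits X]

/-- The zero morphism from a pointed object into a quotient algebra whose `e`-th
valuation is the zero generalized element. -/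
noncomputable def zeroHom {Zc : Alg S X Q} (hZc : IsZero Zc) (Z₀ : Alg S (Type w) Q)
    {A : Alg S X Q} {W : X} {I : Type} {k : ℕ} (v : I → Fin k → (W ⟶ A.carrier))
    (e : Fin k) (he : ∀ i₀, v i₀ e = zeroc hZc A W) : Z₀ ⟶ QAlg A v where
  hom := TypeCat.ofHom fun _ => Quotient.mk (qrel A v) (Term.var e)
  comm o := by
    ext p
    show Quotient.mk (qrel A v) (Term.var e) =
      qops A v o (Limits.Pi.map
        (fun _ : Fin (S.arity o) => (show Z₀.carrier ⟶ QCar A v from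
          TypeCat.ofHom fun _ => Quotient.mk (qrel A v) (Term.var e))) p)
    rw [qops_mk A v o _ (fun _ => Term.var e) (fun a => by rw [pi_map_apply]; rfl)]
    apply Quotient.sound
    intro i₀
    rw [evalX_app]
    rw [evalX_var, he i₀]
    exact (zeroc_absorb hZc A W o).symm

@[simp] lemma zeroHom_apply {Zc : Alg S X Q} (hZc : IsZero Zc) (Z₀ : Alg S (Type w) Q)
    {A : Alg S X Q} {W : X} {I : Type} {k : ℕ} (v : I → Fin k → (W ⟶ A.carrier))
    (e : Fin k) (he : ∀ i₀, v i₀ e = zeroc hZc A W) (x : Z₀.carrier) :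
    (zeroHom hZc Z₀ v e he).hom x = Quotient.mk (qrel A v) (Term.var e) := rfl

end Final
/-- If a pointed quasi-variety `V` (given by a signature and quasi-identities, with
`V = Alg S (Type w) Q` its category of set models) satisfies "zero kernel implies mono",
then so does the category `V(X) = Alg S X Q` of internal `V`-algebras in any finitely
complete category `X`. -/
theorem stmt17 (S : Signature.{w}) (Q : List (QuasiId S)) (X : Type u) [Category.{v} X]
    [HasFiniteLimits X]
    (hpt : ∃ Z : Alg S (Type w) Q, IsZero Z)
    (hV : ZeroKerMono (Alg S (Type w) Q)) :
    ZeroKerMono (Alg S X Q) := by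
  obtain ⟨Z₀, hZ₀⟩ := hpt
  intro Zal A B K hZ f i j hpb hK
  have hcancel : ∀ (W : X) (a b : W ⟶ A.carrier), a ≫ f.hom = b ≫ f.hom → a = b := by
    intro W a b hab
    set vA : Unit → Fin 3 → (W ⟶ A.carrier) := fun _ => ![a, b, zeroc hZ A W] with hvA
    set vB : Unit → Fin 3 → (W ⟶ B.carrier) :=
      fun _ => ![a ≫ f.hom, b ≫ f.hom, zeroc hZ B W] with hvB
    have hvAB : ∀ i₀ : Unit, (fun idx => vA i₀ idx ≫ f.hom) = vB i₀ := by
      intro i₀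
      funext idx
      fin_cases idx <;> simp [hvA, hvB, zeroc_comp hZ f W]
    have hBA : ∀ t : Term S 3,
        evalX B.toPreAlg (vB ()) t = evalX A.toPreAlg (vA ()) t ≫ f.hom := by
      intro t
      rw [evalX_comp_hom f.hom f.comm, hvAB ()]
    have hφc : ∀ t s : Term S 3,
        (∀ i₀ : Unit, evalX A.toPreAlg (vA i₀) t = evalX A.toPreAlg (vA i₀) s) →
        ∀ i₁ : Unit, evalX B.toPreAlg (vB i₁) (t.subst Term.var) =
          evalX B.toPreAlg (vB i₁) (s.subst Term.var) := by
      intro t s h i₁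
      rw [subst_var, subst_var, hBA t, hBA s, h ()]
    set φ : QAlg A vA ⟶ QAlg B vB := qhom A vA vB Term.var hφc with hφ
    have heA : ∀ i₀ : Unit, vA i₀ 2 = zeroc hZ A W := fun _ => by simp [hvA]
    have heB : ∀ i₀ : Unit, vB i₀ 2 = zeroc hZ B W := fun _ => by simp [hvB]
    set ιM := zeroHom hZ Z₀ vA 2 heA with hιM
    set ιN := zeroHom hZ Z₀ vB 2 heB with hιN
    have hzN : hZ₀.to_ (QAlg B vB) = ιN := hZ₀.eq_of_src _ _
    have hsq : ιM ≫ φ = (𝟙 Z₀) ≫ hZ₀.to_ (QAlg B vB) := hZ₀.eq_of_src _ _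
    have hlim : IsLimit (PullbackCone.mk ιM (𝟙 Z₀) hsq) := by
      refine PullbackCone.IsLimit.mk hsq (fun s => s.snd) (fun s => ?_) (fun s => ?_)
        (fun s m _ hm2 => ?_)
      · apply IAlgHom.ext
        ext x
        have hc := congrArg IAlgHom.hom s.condition
        have h1 : φ.hom (s.fst.hom x) = (hZ₀.to_ (QAlg B vB)).hom (s.snd.hom x) :=
          types_congr_hom hc x
        have h1' : φ.hom (s.fst.hom x) = Quotient.mk (qrel B vB) (Term.var 2) :=
          h1.trans (types_congr_hom (congrArg IAlgHom.hom hzN) (s.snd.hom x))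
        obtain ⟨t, ht⟩ := Quotient.exists_rep (s.fst.hom x)
        rw [← ht] at h1'
        rw [hφ, qhom_mk] at h1'
        have h2 : evalX B.toPreAlg (vB ()) (t.subst Term.var) =
            evalX B.toPreAlg (vB ()) (Term.var 2) := Quotient.exact h1' ()
        rw [subst_var] at h2
        have h3 : evalX A.toPreAlg (vA ()) t = zeroc hZ A W := by
          apply star hZ f i j hpb hK
          rw [← hBA t, h2, evalX_var, heB ()]
        show (s.snd ≫ ιM).hom x = s.fst.hom x
        rw [← ht]
        show Quotient.mk (qrel A vA) (Term.var 2) = Quotient.mk (qrel A vA) t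
        apply Quotient.sound
        intro i₀
        rw [evalX_var, heA i₀, h3]
      · exact Category.comp_id s.snd
      · exact (Category.comp_id m).symm.trans hm2
    have hpbset : IsPullback ιM (𝟙 Z₀) φ (hZ₀.to_ (QAlg B vB)) := IsPullback.of_isLimit hlim
    have hmono : Mono φ := hV hZ₀ φ ιM (𝟙 Z₀) hpbset hZ₀
    set vP : Fin 2 → Fin 1 → (W ⟶ A.carrier) := ![fun _ => a, fun _ => b] with hvP
    have hγc : ∀ (e : Fin 2) (t s : Term S 1),
        (∀ i₀ : Fin 2, evalX A.toPreAlg (vP i₀) t = evalX A.toPreAlg (vP i₀) s) →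
        ∀ i₁ : Unit,
          evalX A.toPreAlg (vA i₁) (t.subst (fun _ => Term.var ⟨e.1, by omega⟩)) =
          evalX A.toPreAlg (vA i₁) (s.subst (fun _ => Term.var ⟨e.1, by omega⟩)) := by
      intro e t s h i₁
      rw [evalX_subst, evalX_subst]
      have he : (fun j : Fin 1 => evalX A.toPreAlg (vA i₁)
          (Term.var (⟨e.1, by omega⟩ : Fin 3))) = vP e := by
        funext j
        rw [evalX_var]
        fin_cases e <;> fin_cases j <;> simp [hvA, hvP]
      rw [he, h e]
    set γ := qhom A vP vA (fun _ => Term.var 0) (hγc 0) with hγ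
    set δ := qhom A vP vA (fun _ => Term.var 1) (hγc 1) with hδ
    have hγδ : γ ≫ φ = δ ≫ φ := by
      apply IAlgHom.ext
      ext x
      obtain ⟨t, rfl⟩ := Quotient.exists_rep x
      show φ.hom (γ.hom (Quotient.mk (qrel A vP) t)) =
        φ.hom (δ.hom (Quotient.mk (qrel A vP) t))
      rw [hγ, hδ, hφ, qhom_mk, qhom_mk, qhom_mk, qhom_mk]
      apply Quotient.sound
      intro i₁
      rw [subst_var, subst_var, evalX_subst, evalX_subst]
      have h0 : (fun j : Fin 1 => evalX B.toPreAlg (vB i₁) (Term.var 0)) =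
          fun _ : Fin 1 => a ≫ f.hom := by funext j; rw [evalX_var]; simp [hvB]
      have h1 : (fun j : Fin 1 => evalX B.toPreAlg (vB i₁) (Term.var 1)) =
          fun _ : Fin 1 => b ≫ f.hom := by funext j; rw [evalX_var]; simp [hvB]
      rw [h0, h1, hab]
    have hgd : γ = δ := (cancel_mono φ).mp hγδ
    have hfin := types_congr_hom (congrArg IAlgHom.hom hgd) (Quotient.mk (qrel A vP) (Term.var 0))
    rw [hγ, hδ, qhom_mk, qhom_mk] at hfin
    have hrel := Quotient.exact hfin ()
    show a = b
    have ha : evalX A.toPreAlg (vA ()) ((Term.var (0 : Fin 1)).subst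
        (fun _ => Term.var (0 : Fin 3))) = a := by rw [Term.subst, evalX_var]; simp [hvA]
    have hb : evalX A.toPreAlg (vA ()) ((Term.var (0 : Fin 1)).subst
        (fun _ => Term.var (1 : Fin 3))) = b := by rw [Term.subst, evalX_var]; simp [hvA]
    rw [← ha, ← hb]
    exact hrel
  refine ⟨fun {C} u v' huv => ?_⟩
  apply IAlgHom.ext
  exact hcancel _ u.hom v'.hom (by rw [← IAlgHom.comp_hom, huv, IAlgHom.comp_hom])
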